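/- arXiv:2201.02013 — 3 statements merged into one kernel-verified Lean document; each statement's English description precedes it below -/
import Mathlib

section
/- Let n ≥ 2 and let x ∈ {0,1}^n be neither the all-zero nor the all-one sequence. If y ∈ {0,1}^{n−1} can be obtained from x by deleting one symbol of x and substituting at most one symbol of x with a different symbol, then there exist distinct d, e ∈ {1,…,n} such that y = E(x, d, e); that is, y can be obtained from x by deleting one symbol and substituting exactly one symbol. -/
/-- The bit of `x` at 1-based position `p` (junk value `0` out of range). -/
def getBit {n : ℕ} (x : Fin n → Fin 2) (p : ℕ) : Fin 2 :=
  if h : p - 1 < n then x ⟨p - 1, h⟩ else 0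

/-- Hamming weight of a binary sequence. -/
def wt {n : ℕ} (x : Fin n → Fin 2) : ℕ := ∑ i, (x i : ℕ)

/-- The `j`-th order VT syndrome `f_j(x) = Σ_{i=1}^n (Σ_{ℓ=1}^i ℓ^{j-1}) x_i`. -/
def vtSyn {n : ℕ} (j : ℕ) (x : Fin n → Fin 2) : ℕ :=
  ∑ i : Fin n, (∑ l ∈ Finset.Icc 1 ((i : ℕ) + 1), l ^ (j - 1)) * (x i : ℕ)

/-- Substitute the symbol at 1-based position `e` of `x` with its complement. -/
def substAt {n : ℕ} (x : Fin n → Fin 2) (e : ℕ) : Fin n → Fin 2 :=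
  fun i => if (i : ℕ) + 1 = e then 1 - x i else x i

/-- Delete the symbol at 1-based position `d` of `x`. -/
def delAt {n : ℕ} (x : Fin n → Fin 2) (d : ℕ) : Fin (n - 1) → Fin 2 :=
  fun i => if (i : ℕ) + 1 < d then getBit x ((i : ℕ) + 1) else getBit x ((i : ℕ) + 2)

/-- `E(x,d,e)`: delete the symbol at position `d` and substitute the symbol at
position `e` of `x` (positions are 1-based, taken in the original `x`). -/
def delSub {n : ℕ} (x : Fin n → Fin 2) (d e : ℕ) : Fin (n - 1) → Fin 2 :=
  delAt (substAt x e) d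

/-- The single-deletion single-substitution error ball `B_{1,1}(x)`. -/
def ball {n : ℕ} (x : Fin n → Fin 2) : Set (Fin (n - 1) → Fin 2) :=
  {y | (∃ d ∈ Finset.Icc 1 n, y = delAt x d) ∨
       ∃ d ∈ Finset.Icc 1 n, ∃ e ∈ Finset.Icc 1 n, d ≠ e ∧ y = delSub x d e}

/-- The code `C_n(c0,c1,c2)`. -/
def codeC (n : ℕ) (c0 c1 c2 : ℕ) : Finset (Fin n → Fin 2) :=
  Finset.univ.filter fun x =>
    x ≠ (fun _ => 0) ∧ x ≠ (fun _ => 1) ∧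
    wt x % 4 = c0 ∧ vtSyn 1 x % (2 * n) = c1 ∧ vtSyn 2 x % (2 * n ^ 2) = c2

/-- `u_i = Σ_{ℓ=i}^n x_ℓ − Σ_{ℓ=i}^n x'_ℓ` (1-based positions, value in `ℤ`). -/
def uSeq {n : ℕ} (x x' : Fin n → Fin 2) (i : ℕ) : ℤ :=
  (∑ l ∈ Finset.Icc i n, ((getBit x l : ℕ) : ℤ)) -
    ∑ l ∈ Finset.Icc i n, ((getBit x' l : ℕ) : ℤ)

lemma getBit_succ {n : ℕ} (x : Fin n → Fin 2) (m : ℕ) (hm : m < n) :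
    getBit x (m+1) = x ⟨m, hm⟩ := by
  simp only [getBit, Nat.add_sub_cancel]
  rw [dif_pos hm]

lemma getBit_subst {n : ℕ} (x : Fin n → Fin 2) (e p : ℕ) (h1 : 1 ≤ p) (h2 : p ≤ n) :
    getBit (substAt x e) p = if p = e then 1 - getBit x p else getBit x p := by
  have hlt : p - 1 < n := by omega
  have hp : p - 1 + 1 = p := by omega
  simp only [getBit, substAt, dif_pos hlt, hp]

lemma delAt_shift {n : ℕ} (x : Fin n → Fin 2) (d e : ℕ) (hde : d ≤ e)
    (hconst : ∀ k, d ≤ k → k < e → getBit x k = getBit x (k+1)) :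
    delAt x d = delAt x e := by
  funext i
  simp only [delAt]
  rcases lt_or_ge ((i:ℕ)+1) d with h | h
  · rw [if_pos h, if_pos (by omega)]
  · rw [if_neg (by omega)]
    rcases lt_or_ge ((i:ℕ)+1) e with h2 | h2
    · rw [if_pos h2]; exact (hconst ((i:ℕ)+1) h h2).symm
    · rw [if_neg (by omega)]

lemma fin2_flip {a b : Fin 2} (h : a ≠ b) : 1 - a = b := by
  fin_cases a <;> fin_cases b <;> simp_all

lemma delAt_eq_delSub_right {n : ℕ} (x : Fin n → Fin 2) (e : ℕ) (he1 : 1 ≤ e) (he2 : e + 1 ≤ n)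
    (hne : getBit x e ≠ getBit x (e+1)) :
    delAt x e = delSub x (e+1) e := by
  funext i
  have hi : (i:ℕ) < n - 1 := i.isLt
  simp only [delSub, delAt]
  rcases lt_trichotomy ((i:ℕ)+1) e with h | h | h
  · rw [if_pos h, if_pos (by omega),
      getBit_subst x e ((i:ℕ)+1) (by omega) (by omega), if_neg (by omega)]
  · rw [if_neg (by omega), if_pos (by omega),
      getBit_subst x e ((i:ℕ)+1) (by omega) (by omega), if_pos h]
    have : (i:ℕ) + 2 = e + 1 := by omega
    rw [this, h, ← fin2_flip hne]
  · rw [if_neg (by omega), if_neg (by omega),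
      getBit_subst x e ((i:ℕ)+2) (by omega) (by omega), if_neg (by omega)]

lemma delAt_eq_delSub_left {n : ℕ} (x : Fin n → Fin 2) (e : ℕ) (he1 : 1 ≤ e) (he2 : e + 1 ≤ n)
    (hne : getBit x e ≠ getBit x (e+1)) :
    delAt x (e+1) = delSub x e (e+1) := by
  funext i
  have hi : (i:ℕ) < n - 1 := i.isLt
  simp only [delSub, delAt]
  rcases lt_trichotomy ((i:ℕ)+1) e with h | h | h
  · rw [if_pos (by omega), if_pos h,
      getBit_subst x (e+1) ((i:ℕ)+1) (by omega) (by omega), if_neg (by omega)]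
  · rw [if_pos (by omega), if_neg (by omega),
      getBit_subst x (e+1) ((i:ℕ)+2) (by omega) (by omega), if_pos (by omega)]
    have h2 : (i:ℕ) + 2 = e + 1 := by omega
    rw [h, h2, fin2_flip (Ne.symm hne)]
  · rw [if_neg (by omega), if_neg (by omega),
      getBit_subst x (e+1) ((i:ℕ)+2) (by omega) (by omega), if_neg (by omega)]

lemma exists_adj_diff {n : ℕ} (hn : 2 ≤ n) (x : Fin n → Fin 2)
    (h0 : x ≠ fun _ => 0) (h1 : x ≠ fun _ => 1) :
    ∃ k, 1 ≤ k ∧ k ≤ n - 1 ∧ getBit x k ≠ getBit x (k+1) := by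
  by_contra h
  push_neg at h
  have hconst : ∀ m (hm : m < n), x ⟨m, hm⟩ = x ⟨0, by omega⟩ := by
    intro m
    induction m with
    | zero => intro hm; rfl
    | succ m ih =>
      intro hm
      have hm' : m < n := by omega
      have hadj := h (m+1) (by omega) (by omega)
      rw [getBit_succ x m hm'] at hadj
      have h2 : getBit x (m+1+1) = x ⟨m+1, hm⟩ := getBit_succ x (m+1) hm
      rw [h2] at hadj
      rw [← hadj]; exact ih hm'
  obtain ⟨v, hv⟩ : ∃ v, x ⟨0, by omega⟩ = v := ⟨_, rfl⟩
  fin_cases v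
  · exact h0 (funext fun i => by rw [hconst i i.isLt, hv]; rfl)
  · exact h1 (funext fun i => by rw [hconst i i.isLt, hv]; rfl)

lemma delAt_in_delSub {n : ℕ} (hn : 2 ≤ n) (x : Fin n → Fin 2)
    (h0 : x ≠ fun _ => 0) (h1 : x ≠ fun _ => 1) (d : ℕ) (hd1 : 1 ≤ d) (hd2 : d ≤ n) :
    ∃ d' ∈ Finset.Icc 1 n, ∃ e' ∈ Finset.Icc 1 n, d' ≠ e' ∧ delAt x d = delSub x d' e' := by
  obtain ⟨k0, hk01, hk02, hk0⟩ := exists_adj_diff hn x h0 h1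
  by_cases hA : ∃ k, d ≤ k ∧ k ≤ n - 1 ∧ getBit x k ≠ getBit x (k+1)
  · classical
    set e := Nat.find hA with he
    obtain ⟨hde, hen, hdiff⟩ := Nat.find_spec hA
    have hshift : delAt x d = delAt x e := by
      apply delAt_shift x d e hde
      intro k hk1 hk2
      by_contra hne
      have hfl : Nat.find hA ≤ k := Nat.find_le ⟨hk1, by omega, hne⟩
      omega
    refine ⟨e+1, by simp [Finset.mem_Icc]; omega, e, ?_, by omega, ?_⟩
    · simp [Finset.mem_Icc]; omega
    · rw [hshift]; exact delAt_eq_delSub_right x e (by omega) (by omega) hdiff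
  · push_neg at hA
    classical
    set k := Nat.findGreatest (fun k => 1 ≤ k ∧ getBit x k ≠ getBit x (k+1)) (n-1) with hk
    have hP : (fun k => 1 ≤ k ∧ getBit x k ≠ getBit x (k+1)) k0 := ⟨hk01, hk0⟩
    have hspec : 1 ≤ k ∧ getBit x k ≠ getBit x (k+1) :=
      Nat.findGreatest_spec (P := fun k => 1 ≤ k ∧ getBit x k ≠ getBit x (k+1)) (m := k0) (show k0 ≤ n - 1 by omega) hP
    have hkn : k ≤ n - 1 := Nat.findGreatest_le _
    have hkd : k < d := by
      by_contra hc
      exact hspec.2 (hA k (by omega) hkn)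
    have hshift : delAt x (k+1) = delAt x d := by
      apply delAt_shift x (k+1) d (by omega)
      intro j hj1 hj2
      by_contra hne
      have hPj : (fun k => 1 ≤ k ∧ getBit x k ≠ getBit x (k+1)) j := ⟨by omega, hne⟩
      have hle : j ≤ Nat.findGreatest (fun k => 1 ≤ k ∧ getBit x k ≠ getBit x (k+1)) (n-1) :=
        Nat.le_findGreatest (by omega) hPj
      omega
    refine ⟨k, by simp [Finset.mem_Icc]; omega, k+1, by simp [Finset.mem_Icc]; omega, by omega, ?_⟩
    rw [← hshift]
    exact delAt_eq_delSub_left x k hspec.1 (by omega) hspec.2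

/-- if `x` is neither all-zero nor all-one and `y ∈ B_{1,1}(x)`,
then `y = E(x,d,e)` for some distinct `d, e ∈ [1,n]`. -/
theorem stmt5 (n : ℕ) (hn : 2 ≤ n) (x : Fin n → Fin 2)
    (h0 : x ≠ fun _ => 0) (h1 : x ≠ fun _ => 1)
    (y : Fin (n - 1) → Fin 2) (hy : y ∈ ball x) :
    ∃ d ∈ Finset.Icc 1 n, ∃ e ∈ Finset.Icc 1 n, d ≠ e ∧ y = delSub x d e := by
  rcases hy with ⟨d, hd, rfl⟩ | h
  · simp only [Finset.mem_Icc] at hd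
    exact delAt_in_delSub hn x h0 h1 d hd.1 hd.2
  · exact h
end

section
/- Let n ≥ 2 and let x ∈ {0,1}^n be not the all-zero sequence. If y ∈ {0,1}^{n−1} is obtained from x by deleting a single symbol equal to 0 (and no substitution), then there exist distinct d, e ∈ {1,…,n} with x_d = 1 and x_e = 0 such that y = E(x, d, e); that is, y can also be obtained from x by deleting a 1 and substituting a 0 with a 1. -/
lemma fin2_eq_zero (a : Fin 2) (h : a ≠ 1) : a = 0 := by
  fin_cases a <;> simp_all

lemma getBit_substAt {n : ℕ} (x : Fin n → Fin 2) (e p : ℕ)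
    (hp1 : 1 ≤ p) (hpn : p ≤ n) :
    getBit (substAt x e) p = if p = e then 1 - getBit x p else getBit x p := by
  have h : p - 1 < n := by omega
  have h1 : p - 1 + 1 = p := by omega
  simp [getBit, substAt, h, h1]

/-- if `x` is not all-zero and `y` is obtained from `x` by deleting
a `0`, then `y = E(x,d,e)` for some distinct `d, e` with `x_d = 1`, `x_e = 0`. -/
theorem stmt6 (n : ℕ) (hn : 2 ≤ n) (x : Fin n → Fin 2)
    (h0 : x ≠ fun _ => 0)
    (d0 : ℕ) (hd0 : d0 ∈ Finset.Icc 1 n) (hx0 : getBit x d0 = 0)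
    (y : Fin (n - 1) → Fin 2) (hy : y = delAt x d0) :
    ∃ d ∈ Finset.Icc 1 n, ∃ e ∈ Finset.Icc 1 n,
      d ≠ e ∧ getBit x d = 1 ∧ getBit x e = 0 ∧ y = delSub x d e := by
  obtain ⟨j, hj⟩ : ∃ j : Fin n, x j = 1 := by
    by_contra hc
    push_neg at hc
    exact h0 (funext fun i => fin2_eq_zero (x i) (hc i))
  simp only [Finset.mem_Icc] at hd0
  obtain ⟨hd01, hd0n⟩ := hd0
  have hgj : getBit x ((j : ℕ) + 1) = 1 := by
    simpa [getBit, j.isLt] using hj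
  set S := (Finset.Icc 1 n).filter (fun p => getBit x p = 1 ∧ p < d0) with hSdef
  by_cases hS : S.Nonempty
  · -- there is a 1 strictly left of d0; take the rightmost one
    set d := S.max' hS with hd
    have hdS : d ∈ S := S.max'_mem hS
    simp only [hSdef, Finset.mem_filter, Finset.mem_Icc] at hdS
    obtain ⟨⟨hd1, hdn⟩, hxd, hdd0⟩ := hdS
    have key0 : ∀ p, d < p → p ≤ d0 → getBit x p = 0 := by
      intro p hp1 hp2
      rcases eq_or_lt_of_le hp2 with rfl | hlt
      · exact hx0
      · apply fin2_eq_zero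
        intro h1
        have hpS : p ∈ S := by
          simp only [hSdef, Finset.mem_filter, Finset.mem_Icc]
          exact ⟨⟨by omega, by omega⟩, h1, hlt⟩
        have := S.le_max' p hpS
        omega
    refine ⟨d, by simp only [Finset.mem_Icc]; omega,
      d + 1, by simp only [Finset.mem_Icc]; omega, by omega, hxd,
      key0 (d + 1) (by omega) (by omega), ?_⟩
    subst hy
    funext i
    have hik : (i : ℕ) < n - 1 := i.isLt
    show delAt x d0 i = delAt (substAt x (d + 1)) d i
    rw [delAt, delAt,
      getBit_substAt x (d + 1) ((i : ℕ) + 1) (by omega) (by omega),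
      getBit_substAt x (d + 1) ((i : ℕ) + 2) (by omega) (by omega)]
    by_cases h1 : (i : ℕ) + 1 < d
    · rw [if_pos h1, if_pos (by omega), if_neg (by omega)]
    · by_cases h2 : (i : ℕ) + 1 = d
      · rw [if_neg h1, if_pos (by omega), if_pos (by omega : (i : ℕ) + 2 = d + 1),
          key0 ((i : ℕ) + 2) (by omega) (by omega), h2, hxd]
        rfl
      · by_cases h3 : (i : ℕ) + 1 < d0
        · rw [if_neg h1, if_pos h3, if_neg (by omega : ¬ (i : ℕ) + 2 = d + 1),
            key0 ((i : ℕ) + 1) (by omega) (by omega),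
            key0 ((i : ℕ) + 2) (by omega) (by omega)]
        · rw [if_neg h1, if_neg h3, if_neg (by omega : ¬ (i : ℕ) + 2 = d + 1)]
  · -- no 1 left of d0; take the leftmost 1 (it is right of d0)
    have hleft : ∀ p, 1 ≤ p → p ≤ d0 → getBit x p = 0 := by
      intro p hp1 hp2
      rcases eq_or_lt_of_le hp2 with rfl | hlt
      · exact hx0
      · apply fin2_eq_zero
        intro h1
        exact hS ⟨p, by simp only [hSdef, Finset.mem_filter, Finset.mem_Icc]
                        exact ⟨⟨hp1, by omega⟩, h1, hlt⟩⟩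
    set T := (Finset.Icc 1 n).filter (fun p => getBit x p = 1 ∧ d0 < p) with hTdef
    have hT : T.Nonempty := by
      refine ⟨(j : ℕ) + 1, ?_⟩
      simp only [hTdef, Finset.mem_filter, Finset.mem_Icc]
      refine ⟨⟨by omega, by omega⟩, hgj, ?_⟩
      by_contra hc
      have := hleft ((j : ℕ) + 1) (by omega) (by omega)
      rw [hgj] at this
      exact absurd this (by decide)
    set d := T.min' hT with hd
    have hdT : d ∈ T := T.min'_mem hT
    simp only [hTdef, Finset.mem_filter, Finset.mem_Icc] at hdT
    obtain ⟨⟨hd1, hdn⟩, hxd, hdd0⟩ := hdT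
    have key0 : ∀ p, d0 ≤ p → p < d → getBit x p = 0 := by
      intro p hp1 hp2
      rcases eq_or_lt_of_le hp1 with rfl | hlt
      · exact hx0
      · apply fin2_eq_zero
        intro h1
        have hpT : p ∈ T := by
          simp only [hTdef, Finset.mem_filter, Finset.mem_Icc]
          exact ⟨⟨by omega, by omega⟩, h1, hlt⟩
        have := T.min'_le p hpT
        omega
    refine ⟨d, by simp only [Finset.mem_Icc]; omega,
      d - 1, by simp only [Finset.mem_Icc]; omega, by omega, hxd,
      key0 (d - 1) (by omega) (by omega), ?_⟩
    subst hy
    funext i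
    have hik : (i : ℕ) < n - 1 := i.isLt
    show delAt x d0 i = delAt (substAt x (d - 1)) d i
    rw [delAt, delAt,
      getBit_substAt x (d - 1) ((i : ℕ) + 1) (by omega) (by omega),
      getBit_substAt x (d - 1) ((i : ℕ) + 2) (by omega) (by omega)]
    by_cases h1 : (i : ℕ) + 1 < d0
    · rw [if_pos h1, if_pos (by omega), if_neg (by omega)]
    · by_cases h2 : (i : ℕ) + 1 = d - 1
      · rw [if_neg h1, if_pos (by omega), if_pos h2, h2,
          key0 (d - 1) (by omega) (by omega)]
        have h4 : (i : ℕ) + 2 = d := by omega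
        rw [h4, hxd]
        rfl
      · by_cases h3 : (i : ℕ) + 1 < d
        · rw [if_neg h1, if_pos h3, if_neg h2,
            key0 ((i : ℕ) + 1) (by omega) (by omega),
            key0 ((i : ℕ) + 2) (by omega) (by omega)]
        · rw [if_neg h1, if_neg h3, if_neg (by omega : ¬ (i : ℕ) + 2 = d - 1)]
end

section
/- Let n ≥ 2, (c_0, c_1, c_2) ∈ Z_4 × Z_{2n} × Z_{2n²}, and suppose x, x' ∈ C_n(c_0,c_1,c_2) and d_1, e_1, d_2, e_2 ∈ {1,…,n} with d_1 ≠ e_1, d_2 ≠ e_2, and E(x, d_1, e_1) = E(x', d_2, e_2). If e_1 < d_1 ≤ d_2 and e_2 < d_1 ≤ d_2 (Case (i)), then x = x'. -/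
/-!
Write `x = substAt y e₁` and `x' = substAt y' e₂`; then deleting position `d₁` of `y` and
position `d₂` of `y'` gives the same word, so `y` and `y'` agree except on the window
`[d₁, d₂]`, where `y'` is `y` shifted by one. The weight modulo 4 forces `y_{d₁} = y'_{d₂} =: b`
and `y_{e₁} = y_{e₂}`. The differences of the syndromes with weights `p` and `p (p + 1)` are then
smaller in absolute value than their moduli `2n` and `4n²`, so they vanish. Up to the sign
`1 - 2b`, this says that the nonnegative window sequence `|y_{p+1} - b|` has first moment
`±(e₂ - e₁)` and (weight `2(p+1)`) second moment `±(e₂(e₂+1) - e₁(e₁+1))`, which is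
`e₁ + e₂ + 1 < 2(d₁ + 1)` times the first one; as the window lies right of `d₁`, both vanish.
Hence `e₁ = e₂` and `y` is constant on the window, which forces `y = y'` and `x = x'`.
-/

open Finset

def bitZ {n : ℕ} (x : Fin n → Fin 2) (p : ℕ) : ℤ := (getBit x p : ℕ)

def weightedSum {n : ℕ} (v : ℕ → ℤ) (x : Fin n → Fin 2) : ℤ :=
  ∑ p ∈ Icc 1 n, v p * bitZ x p

section Syndromes

variable {n : ℕ}

lemma bitZ_eq_zero_or_one (x : Fin n → Fin 2) (p : ℕ) : bitZ x p = 0 ∨ bitZ x p = 1 := by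
  have := (getBit x p).is_le
  unfold bitZ
  omega

lemma bitZ_succ (x : Fin n → Fin 2) (i : Fin n) : bitZ x (i + 1) = (x i : ℕ) := by
  simp [bitZ, getBit]

lemma sum_mul_val_eq_weightedSum (v : ℕ → ℤ) (x : Fin n → Fin 2) :
    ∑ i : Fin n, v (i + 1) * ((x i : ℕ) : ℤ) = weightedSum v x := by
  simp_rw [← bitZ_succ]
  rw [Fin.sum_univ_eq_sum_range (fun i => v (i + 1) * bitZ x (i + 1)), range_eq_Ico,
    sum_Ico_add' (fun p => v p * bitZ x p), zero_add, Ico_add_one_right_eq_Icc, weightedSum]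

lemma vtSyn_eq_weightedSum (j : ℕ) (x : Fin n → Fin 2) :
    (vtSyn j x : ℤ) = weightedSum (fun p => ((∑ l ∈ Icc 1 p, l ^ (j - 1) : ℕ) : ℤ)) x := by
  rw [← sum_mul_val_eq_weightedSum, vtSyn]
  push_cast
  rfl

lemma wt_eq_weightedSum (x : Fin n → Fin 2) : (wt x : ℤ) = weightedSum 1 x := by
  rw [← sum_mul_val_eq_weightedSum, wt]
  simp

lemma two_mul_sum_Icc_id (p : ℕ) : 2 * ∑ l ∈ Icc 1 p, (l : ℤ) = p * (p + 1) := by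
  induction p with
  | zero => simp
  | succ p ih =>
    rw [sum_Icc_succ_top (by omega), mul_add, ih]
    push_cast
    ring

lemma vtSyn_one_eq_weightedSum (x : Fin n → Fin 2) :
    (vtSyn 1 x : ℤ) = weightedSum (fun p => (p : ℤ)) x := by
  simp [vtSyn_eq_weightedSum]

lemma two_mul_vtSyn_two_eq_weightedSum (x : Fin n → Fin 2) :
    2 * (vtSyn 2 x : ℤ) = weightedSum (fun p => (p : ℤ) * (p + 1)) x := by
  simp only [vtSyn_eq_weightedSum, weightedSum, mul_sum, ← mul_assoc]
  push_cast
  simp only [pow_one, two_mul_sum_Icc_id]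

lemma eq_of_bitZ_eq {y y' : Fin n → Fin 2} (h : ∀ p ∈ Icc 1 n, bitZ y p = bitZ y' p) :
    y = y' := by
  funext i
  have := h (i + 1) (mem_Icc.2 ⟨by omega, i.isLt⟩)
  rw [bitZ_succ, bitZ_succ] at this
  exact Fin.ext (by exact_mod_cast this)

lemma dvd_weightedSum_sub_of_mem_codeC {c₀ c₁ c₂ : ℕ} {x x' : Fin n → Fin 2}
    (hx : x ∈ codeC n c₀ c₁ c₂) (hx' : x' ∈ codeC n c₀ c₁ c₂) :
    4 ∣ weightedSum 1 x - weightedSum 1 x' ∧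
    2 * (n : ℤ) ∣ weightedSum (fun p => (p : ℤ)) x - weightedSum (fun p => (p : ℤ)) x' ∧
    4 * (n : ℤ) ^ 2 ∣ weightedSum (fun p => (p : ℤ) * (p + 1)) x -
      weightedSum (fun p => (p : ℤ) * (p + 1)) x' := by
  simp only [codeC, mem_filter, mem_univ, true_and] at hx hx'
  obtain ⟨-, -, hw, h₁, h₂⟩ := hx
  obtain ⟨-, -, hw', h₁', h₂'⟩ := hx'
  refine ⟨?_, ?_, ?_⟩
  · rw [← wt_eq_weightedSum, ← wt_eq_weightedSum]
    exact_mod_cast Nat.ModEq.dvd (hw'.trans hw.symm)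
  · rw [← vtSyn_one_eq_weightedSum, ← vtSyn_one_eq_weightedSum]
    exact_mod_cast Nat.ModEq.dvd (h₁'.trans h₁.symm)
  · rw [← two_mul_vtSyn_two_eq_weightedSum, ← two_mul_vtSyn_two_eq_weightedSum, ← mul_sub,
      show (4 : ℤ) * n ^ 2 = 2 * (2 * n ^ 2) by ring]
    exact mul_dvd_mul_left 2 (by exact_mod_cast Nat.ModEq.dvd (h₂'.trans h₂.symm))

end Syndromes

section Substitution

variable {n : ℕ}

lemma substAt_substAt (x : Fin n → Fin 2) (e : ℕ) : substAt (substAt x e) e = x := by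
  funext i
  unfold substAt
  split_ifs <;> simp

lemma bitZ_substAt (x : Fin n → Fin 2) {e p : ℕ} (hp : p ∈ Icc 1 n) :
    bitZ (substAt x e) p = if p = e then 1 - bitZ x p else bitZ x p := by
  rw [mem_Icc] at hp
  have hp' : p - 1 < n := by omega
  have hflip : ∀ a : Fin 2, (((1 - a : Fin 2) : ℕ) : ℤ) = 1 - ((a : ℕ) : ℤ) := by decide
  simp only [bitZ, getBit, substAt, dif_pos hp', Nat.sub_add_cancel hp.1]
  split_ifs <;> simp [hflip]

lemma weightedSum_substAt (v : ℕ → ℤ) (x : Fin n → Fin 2) {e : ℕ} (he : e ∈ Icc 1 n) :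
    weightedSum v (substAt x e) = weightedSum v x + v e * (1 - 2 * bitZ x e) := by
  have hterm : ∀ p ∈ Icc 1 n, v p * bitZ (substAt x e) p =
      v p * bitZ x p + if p = e then v e * (1 - 2 * bitZ x e) else 0 := by
    intro p hp
    rw [bitZ_substAt x hp]
    split_ifs with h
    · subst h; ring
    · ring
  rw [weightedSum, sum_congr rfl hterm, sum_add_distrib, sum_ite_eq' _ _, if_pos he, weightedSum]

end Substitution

section Deletion

/-- Deleting position `d₁` of `Y` and position `d₂` of `Y'` (positions `1, …, n`) gives the
same sequence. -/
structure DeletionsAgree (Y Y' : ℕ → ℤ) (n d₁ d₂ : ℕ) : Prop where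
  below : ∀ p ∈ Ico 1 d₁, Y p = Y' p
  between : ∀ p ∈ Ico d₁ d₂, Y (p + 1) = Y' p
  above : ∀ p ∈ Ioc d₂ n, Y p = Y' p

lemma getBit_delAt {n : ℕ} (y : Fin n → Fin 2) (d : ℕ) {p : ℕ} (hp : 1 ≤ p) (hpn : p < n) :
    getBit (delAt y d) p = if p < d then getBit y p else getBit y (p + 1) := by
  have hp' : p - 1 < n - 1 := by omega
  simp only [getBit, delAt, dif_pos hp', Nat.sub_add_cancel hp, show p - 1 + 2 = p + 1 by omega]

lemma deletionsAgree_of_delAt_eq {n d₁ d₂ : ℕ} {y y' : Fin n → Fin 2}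
    (h : delAt y d₁ = delAt y' d₂) (hd₁ : 1 ≤ d₁) (hd : d₁ ≤ d₂) (hd₂ : d₂ ≤ n) :
    DeletionsAgree (bitZ y) (bitZ y') n d₁ d₂ := by
  have hbit : ∀ p, 1 ≤ p → p < n →
      (if p < d₁ then getBit y p else getBit y (p + 1)) =
        if p < d₂ then getBit y' p else getBit y' (p + 1) := by
    intro p hp hpn
    rw [← getBit_delAt y d₁ hp hpn, ← getBit_delAt y' d₂ hp hpn, h]
  refine ⟨fun p hp => ?_, fun p hp => ?_, fun p hp => ?_⟩ <;> simp only [mem_Ico, mem_Ioc] at hp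
  · have := hbit p hp.1 (by omega)
    rw [if_pos hp.2, if_pos (by omega)] at this
    rw [bitZ, bitZ, this]
  · have := hbit p (by omega) (by omega)
    rw [if_neg (by omega), if_pos hp.2] at this
    rw [bitZ, bitZ, this]
  · have := hbit (p - 1) (by omega) (by omega)
    rw [if_neg (by omega), if_neg (by omega), Nat.sub_add_cancel (by omega)] at this
    rw [bitZ, bitZ, this]

namespace DeletionsAgree

variable {Y Y' : ℕ → ℤ} {n d₁ d₂ : ℕ}

lemma sum_sub_sum (h : DeletionsAgree Y Y' n d₁ d₂) (v : ℕ → ℤ) (hd₁ : 1 ≤ d₁) (hd : d₁ ≤ d₂)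
    (hd₂ : d₂ ≤ n) :
    ∑ p ∈ Icc 1 n, v p * Y p - ∑ p ∈ Icc 1 n, v p * Y' p =
      v d₁ * (Y d₁ - Y' d₂) + ∑ p ∈ Ico d₁ d₂, (v (p + 1) - v p) * (Y (p + 1) - Y' d₂) := by
  set f : ℕ → ℤ := fun p => v p * (Y p - Y' p)
  have hlow : ∑ p ∈ Ico 1 d₁, f p = 0 :=
    sum_eq_zero fun p hp => by simp [f, h.below p hp]
  have hhigh : ∑ p ∈ Ico (d₂ + 1) (n + 1), f p = 0 :=
    sum_eq_zero fun p hp => by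
      simp [f, h.above p (by simp only [mem_Ico, mem_Ioc] at hp ⊢; omega)]
  have hY : ∑ p ∈ Ico d₁ (d₂ + 1), v p * Y p =
      v d₁ * Y d₁ + ∑ p ∈ Ico d₁ d₂, v (p + 1) * Y (p + 1) := by
    rw [sum_eq_sum_Ico_succ_bot (by omega), sum_Ico_add' (fun p => v p * Y p)]
  have hY' : ∑ p ∈ Ico d₁ (d₂ + 1), v p * Y' p =
      ∑ p ∈ Ico d₁ d₂, v p * Y (p + 1) + v d₂ * Y' d₂ := by
    rw [sum_Ico_succ_top hd, sum_congr rfl fun p hp => by rw [← h.between p hp]]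
  have hv : v d₂ = v d₁ + ∑ p ∈ Ico d₁ d₂, (v (p + 1) - v p) := by
    rw [sum_Ico_sub v hd]; ring
  calc ∑ p ∈ Icc 1 n, v p * Y p - ∑ p ∈ Icc 1 n, v p * Y' p
      = ∑ p ∈ Ico 1 (n + 1), f p := by
        rw [Ico_add_one_right_eq_Icc, ← sum_sub_distrib]; simp only [f, mul_sub]
    _ = ∑ p ∈ Ico d₁ (d₂ + 1), v p * Y p - ∑ p ∈ Ico d₁ (d₂ + 1), v p * Y' p := by
        rw [← sum_Ico_consecutive f hd₁ (show d₁ ≤ n + 1 by omega),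
          ← sum_Ico_consecutive f (show d₁ ≤ d₂ + 1 by omega) (show d₂ + 1 ≤ n + 1 by omega),
          hlow, hhigh, ← sum_sub_distrib]
        simp only [f, mul_sub, zero_add, add_zero]
    _ = _ := by
        rw [hY, hY', hv]
        simp only [sub_mul, mul_sub, sum_sub_distrib, ← sum_mul]
        ring

lemma eq_of_forall_Icc_eq (h : DeletionsAgree Y Y' n d₁ d₂) (hc : ∀ p ∈ Icc d₁ d₂, Y p = Y' d₂) :
    ∀ p ∈ Icc 1 n, Y p = Y' p := by
  intro p hp
  simp only [mem_Icc] at hp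
  rcases lt_or_ge p d₁ with hp₁ | hp₁
  · exact h.below p (mem_Ico.2 ⟨hp.1, hp₁⟩)
  rcases lt_trichotomy p d₂ with hp₂ | rfl | hp₂
  · rw [← h.between p (mem_Ico.2 ⟨hp₁, hp₂⟩), hc p (mem_Icc.2 ⟨hp₁, hp₂.le⟩),
      hc (p + 1) (mem_Icc.2 ⟨by omega, hp₂⟩)]
  · exact hc p (mem_Icc.2 ⟨hp₁, le_rfl⟩)
  · exact h.above p (mem_Ioc.2 ⟨hp₂, hp.2⟩)

end DeletionsAgree

end Deletion

lemma abs_sum_add_flip_lt {v W : ℕ → ℤ} {d₁ d₂ e₁ e₂ : ℕ} {s : ℤ} (hv : StrictMono v)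
    (hv₀ : 0 ≤ v 0) (hW : ∀ p, |W p| ≤ 1) (hs : |s| ≤ 1) (he₁ : e₁ < d₁) (he₂ : e₂ < d₁)
    (hd : d₁ ≤ d₂) :
    |∑ p ∈ Ico d₁ d₂, (v (p + 1) - v p) * W p + s * (v e₁ - v e₂)| < v d₂ := by
  have hsum : |∑ p ∈ Ico d₁ d₂, (v (p + 1) - v p) * W p| ≤ v d₂ - v d₁ :=
    calc |∑ p ∈ Ico d₁ d₂, (v (p + 1) - v p) * W p|
        ≤ ∑ p ∈ Ico d₁ d₂, |(v (p + 1) - v p) * W p| := abs_sum_le_sum_abs _ _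
      _ ≤ ∑ p ∈ Ico d₁ d₂, (v (p + 1) - v p) := sum_le_sum fun p _ => by
          have hinc : 0 ≤ v (p + 1) - v p := sub_nonneg.2 (hv.monotone (Nat.le_succ p))
          rw [abs_mul, abs_of_nonneg hinc]
          exact mul_le_of_le_one_right hinc (hW p)
      _ = v d₂ - v d₁ := sum_Ico_sub v hd
  have hflip : |s * (v e₁ - v e₂)| < v d₁ := by
    have hvnn : ∀ e, 0 ≤ v e := fun e => hv₀.trans (hv.monotone (Nat.zero_le e))
    calc |s * (v e₁ - v e₂)| ≤ |v e₁ - v e₂| := by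
          rw [abs_mul]; exact mul_le_of_le_one_left (abs_nonneg _) hs
      _ < v d₁ := abs_sub_lt_of_nonneg_of_lt (hvnn e₁) (hv he₁) (hvnn e₂) (hv he₂)
  linarith [abs_add_le (∑ p ∈ Ico d₁ d₂, (v (p + 1) - v p) * W p) (s * (v e₁ - v e₂))]

lemma eq_and_eq_zero_of_moments {W : ℕ → ℤ} {d₁ d₂ e₁ e₂ : ℕ} {s : ℤ} (hW : ∀ p, 0 ≤ W p)
    (hs : s ≠ 0) (he₁ : e₁ < d₁) (he₂ : e₂ < d₁)
    (h₁ : ∑ p ∈ Ico d₁ d₂, W p = s * (e₂ - e₁))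
    (h₂ : ∑ p ∈ Ico d₁ d₂, 2 * ((p : ℤ) + 1) * W p = s * (e₂ * (e₂ + 1) - e₁ * (e₁ + 1))) :
    e₁ = e₂ ∧ ∀ p ∈ Ico d₁ d₂, W p = 0 := by
  set S := ∑ p ∈ Ico d₁ d₂, W p
  have hS : 0 ≤ S := sum_nonneg fun p _ => hW p
  have hlow : 2 * ((d₁ : ℤ) + 1) * S ≤ S * (e₁ + e₂ + 1) := by
    calc 2 * ((d₁ : ℤ) + 1) * S = ∑ p ∈ Ico d₁ d₂, 2 * ((d₁ : ℤ) + 1) * W p := mul_sum _ _ _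
      _ ≤ ∑ p ∈ Ico d₁ d₂, 2 * ((p : ℤ) + 1) * W p := sum_le_sum fun p hp => by
          have : (d₁ : ℤ) ≤ p := by exact_mod_cast (mem_Ico.1 hp).1
          exact mul_le_mul_of_nonneg_right (by linarith) (hW p)
      _ = S * (e₁ + e₂ + 1) := by rw [h₂, h₁]; ring
  have he : (e₁ : ℤ) + e₂ + 1 < 2 * ((d₁ : ℤ) + 1) := by omega
  have hS0 : S = 0 := by nlinarith
  refine ⟨?_, (sum_eq_zero_iff_of_nonneg fun p _ => hW p).1 hS0⟩
  rw [hS0, eq_comm, mul_eq_zero, sub_eq_zero] at h₁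
  exact_mod_cast (h₁.resolve_left hs).symm

/-- The `v`-weighted syndrome difference of `substAt y e₁` and `substAt y' e₂` in terms of
`Y = bitZ y` and `b = bitZ y' d₂`, see `weightedSum_substAt_sub`. -/
def syndromeGap (Y : ℕ → ℤ) (b : ℤ) (d₁ d₂ e₁ e₂ : ℕ) (v : ℕ → ℤ) : ℤ :=
  v d₁ * (Y d₁ - b) + ∑ p ∈ Ico d₁ d₂, (v (p + 1) - v p) * (Y (p + 1) - b) +
    v e₁ * (1 - 2 * Y e₁) - v e₂ * (1 - 2 * Y e₂)

lemma weightedSum_substAt_sub {n d₁ d₂ e₁ e₂ : ℕ} {y y' : Fin n → Fin 2}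
    (h : DeletionsAgree (bitZ y) (bitZ y') n d₁ d₂) (v : ℕ → ℤ) (he₁ : 1 ≤ e₁) (he₁d : e₁ < d₁)
    (he₂ : 1 ≤ e₂) (he₂d : e₂ < d₁) (hd : d₁ ≤ d₂) (hd₂ : d₂ ≤ n) :
    weightedSum v (substAt y e₁) - weightedSum v (substAt y' e₂) =
      syndromeGap (bitZ y) (bitZ y' d₂) d₁ d₂ e₁ e₂ v := by
  rw [weightedSum_substAt v y (mem_Icc.2 ⟨he₁, by omega⟩),
    weightedSum_substAt v y' (mem_Icc.2 ⟨he₂, by omega⟩),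
    ← h.below e₂ (mem_Ico.2 ⟨he₂, he₂d⟩), syndromeGap, weightedSum, weightedSum]
  linear_combination h.sum_sub_sum v (by omega) hd hd₂

section Gap

variable {Y : ℕ → ℤ} {b : ℤ} {d₁ d₂ e₁ e₂ : ℕ}

lemma syndromeGap_one : syndromeGap Y b d₁ d₂ e₁ e₂ 1 = Y d₁ - b + 2 * (Y e₂ - Y e₁) := by
  simp only [syndromeGap, Pi.one_apply, sub_self, zero_mul, sum_const_zero]
  ring

lemma sum_add_flip_eq_zero_of_dvd {v : ℕ → ℤ} {m : ℤ} {n : ℕ}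
    (hY : ∀ p, Y p = 0 ∨ Y p = 1) (hb : Y d₁ = b) (he : Y e₁ = Y e₂) (hv : StrictMono v)
    (hv₀ : 0 ≤ v 0) (he₁ : e₁ < d₁) (he₂ : e₂ < d₁) (hd : d₁ ≤ d₂) (hd₂ : d₂ ≤ n) (hm : v n ≤ m)
    (hdvd : m ∣ syndromeGap Y b d₁ d₂ e₁ e₂ v) :
    ∑ p ∈ Ico d₁ d₂, (v (p + 1) - v p) * (Y (p + 1) - b) + (1 - 2 * Y e₁) * (v e₁ - v e₂) = 0 := by
  have hgap : syndromeGap Y b d₁ d₂ e₁ e₂ v =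
      ∑ p ∈ Ico d₁ d₂, (v (p + 1) - v p) * (Y (p + 1) - b) + (1 - 2 * Y e₁) * (v e₁ - v e₂) := by
    rw [syndromeGap, hb, ← he]; ring
  have hbit : ∀ p, |Y p - b| ≤ 1 := fun p => by
    rw [← hb]; rcases hY p with h | h <;> rcases hY d₁ with h' | h' <;> simp [h, h']
  have hs : |1 - 2 * Y e₁| ≤ 1 := by rcases hY e₁ with h | h <;> simp [h]
  rw [hgap] at hdvd
  refine Int.eq_zero_of_abs_lt_dvd hdvd ?_
  exact (abs_sum_add_flip_lt hv hv₀ (fun p => hbit (p + 1)) hs he₁ he₂ hd).trans_le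
    ((hv.monotone hd₂).trans hm)

end Gap

lemma eq_and_forall_Icc_eq_of_dvd_syndromeGap {Y : ℕ → ℤ} {b : ℤ} {n d₁ d₂ e₁ e₂ : ℕ}
    (hY : ∀ p, Y p = 0 ∨ Y p = 1) (hb : b = 0 ∨ b = 1) (he₁ : e₁ < d₁) (he₂ : e₂ < d₁)
    (hd : d₁ ≤ d₂) (hd₂ : d₂ ≤ n)
    (h₀ : 4 ∣ syndromeGap Y b d₁ d₂ e₁ e₂ 1)
    (h₁ : 2 * (n : ℤ) ∣ syndromeGap Y b d₁ d₂ e₁ e₂ fun p => (p : ℤ))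
    (h₂ : 4 * (n : ℤ) ^ 2 ∣ syndromeGap Y b d₁ d₂ e₁ e₂ fun p => (p : ℤ) * (p + 1)) :
    e₁ = e₂ ∧ ∀ p ∈ Icc d₁ d₂, Y p = b := by
  obtain ⟨hbd, he⟩ : Y d₁ = b ∧ Y e₁ = Y e₂ := by
    rw [syndromeGap_one] at h₀
    have := hY d₁; have := hY e₁; have := hY e₂
    omega
  have hm₁ := sum_add_flip_eq_zero_of_dvd hY hbd he Nat.strictMono_cast le_rfl he₁ he₂ hd
    hd₂ (by omega) h₁
  have hv₂ : StrictMono fun p : ℕ => (p : ℤ) * (p + 1) := fun a c hac => by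
    have : (a : ℤ) < c := by exact_mod_cast hac
    dsimp only
    nlinarith
  have hm₂ := sum_add_flip_eq_zero_of_dvd hY hbd he hv₂ le_rfl he₁ he₂ hd hd₂
    (by nlinarith) h₂
  have hΔ : ∀ p : ℕ, ((p + 1 : ℕ) : ℤ) * ((p + 1 : ℕ) + 1) - p * (p + 1) = 2 * (p + 1) :=
    fun p => by push_cast; ring
  simp only [Nat.cast_add, Nat.cast_one, add_sub_cancel_left, one_mul] at hm₁
  simp only [hΔ] at hm₂
  -- the sign `σ` makes the window sequence nonnegative for both values of `b`
  set σ := 1 - 2 * b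
  have hσ : σ ≠ 0 := by omega
  obtain ⟨rfl, hW⟩ := eq_and_eq_zero_of_moments (d₂ := d₂) (W := fun p => σ * (Y (p + 1) - b))
    (s := σ * (1 - 2 * Y e₁))
    (fun p => by rcases hY (p + 1) with h | h <;> rcases hb with h' | h' <;> simp [σ, h, h'])
    (mul_ne_zero hσ (by rcases hY e₁ with h | h <;> simp [h])) he₁ he₂
    (by rw [← mul_sum]; linear_combination σ * hm₁) (by
      rw [sum_congr rfl fun p _ => mul_left_comm _ σ _, ← mul_sum]
      linear_combination σ * hm₂)
  refine ⟨rfl, fun p hp => ?_⟩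
  rw [mem_Icc] at hp
  rcases hp.1.eq_or_lt with rfl | hp₁
  · exact hbd
  have := hW (p - 1) (mem_Ico.2 ⟨by omega, by omega⟩)
  rwa [Nat.sub_add_cancel (by omega), mul_eq_zero, or_iff_right hσ, sub_eq_zero] at this

theorem stmt10_general (n : ℕ) (c0 c1 c2 : ℕ)
    (x x' : Fin n → Fin 2)
    (hx : x ∈ codeC n c0 c1 c2) (hx' : x' ∈ codeC n c0 c1 c2)
    (d1 e1 d2 e2 : ℕ)
    (he1 : e1 ∈ Finset.Icc 1 n)
    (hd2 : d2 ∈ Finset.Icc 1 n) (he2 : e2 ∈ Finset.Icc 1 n)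
    (hE : delSub x d1 e1 = delSub x' d2 e2)
    (hcase : (e1 < d1 ∧ d1 ≤ d2) ∧ (e2 < d1 ∧ d1 ≤ d2)) :
    x = x' := by
  obtain ⟨⟨he1d, hd⟩, he2d, -⟩ := hcase
  rw [mem_Icc] at he1 hd2 he2
  have hyy : DeletionsAgree (bitZ (substAt x e1)) (bitZ (substAt x' e2)) n d1 d2 :=
    deletionsAgree_of_delAt_eq hE (by omega) hd hd2.2
  rw [← substAt_substAt x e1] at hx
  rw [← substAt_substAt x' e2] at hx'
  obtain ⟨h₀, h₁, h₂⟩ := dvd_weightedSum_sub_of_mem_codeC hx hx'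
  simp only [weightedSum_substAt_sub hyy _ he1.1 he1d he2.1 he2d hd hd2.2] at h₀ h₁ h₂
  obtain ⟨rfl, hconst⟩ := eq_and_forall_Icc_eq_of_dvd_syndromeGap (bitZ_eq_zero_or_one _)
    (bitZ_eq_zero_or_one _ d2) he1d he2d hd hd2.2 h₀ h₁ h₂
  simpa only [substAt_substAt] using
    congrArg (substAt · e1) (eq_of_bitZ_eq (hyy.eq_of_forall_Icc_eq hconst))

/-- Case (i): e1 < d1 ≤ d2 and e2 < d1 ≤ d2 implies x = x'. -/
theorem stmt10 (n : ℕ) (hn : 2 ≤ n) (c0 c1 c2 : ℕ)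
    (hc0 : c0 < 4) (hc1 : c1 < 2 * n) (hc2 : c2 < 2 * n ^ 2)
    (x x' : Fin n → Fin 2)
    (hx : x ∈ codeC n c0 c1 c2) (hx' : x' ∈ codeC n c0 c1 c2)
    (d1 e1 d2 e2 : ℕ)
    (hd1 : d1 ∈ Finset.Icc 1 n) (he1 : e1 ∈ Finset.Icc 1 n)
    (hd2 : d2 ∈ Finset.Icc 1 n) (he2 : e2 ∈ Finset.Icc 1 n)
    (h1 : d1 ≠ e1) (h2 : d2 ≠ e2)
    (hE : delSub x d1 e1 = delSub x' d2 e2)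
    (hcase : (e1 < d1 ∧ d1 ≤ d2) ∧ (e2 < d1 ∧ d1 ≤ d2)) :
    x = x' :=
  stmt10_general n c0 c1 c2 x x' hx hx' d1 e1 d2 e2 he1 hd2 he2 hE hcase
end
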